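/- arXiv:1109.2891 — 4 statements merged into one kernel-verified Lean document; each statement's English description precedes it below -/
import Mathlib

section
/- Let m ≥ 1 and let θ be defined as follows: for α ∈ 𝔽₂^{2m} and 1 ≤ i ≤ 2m-1, θ(α,i) = wt_{i,2m}(α) + i/2 if i is even, and θ(α,i) = wt_{i,2m}(α) + (i-1)/2 + α(2m) if i is odd. Suppose α, β ∈ 𝔽₂^{2m} satisfy α ⊕ β = e ⊕ e_i ⊕ e_j for some 1 ≤ i < j ≤ 2m-1. Then θ(α,i) + θ(β,i) + θ(α,j) + θ(β,j) ≡ 1 (mod 2). -/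
open Finset

/-- The `l`-th coordinate (1-based, `1 ≤ l ≤ 2m`) of a vector in 𝔽₂^{2m}; `0` out of range. -/
def coordZ (m : ℕ) (α : Fin (2*m) → ZMod 2) (l : ℕ) : ZMod 2 :=
  if h : 1 ≤ l ∧ l ≤ 2*m then α ⟨l-1, by omega⟩ else 0

/-- Partial weight `wt_{s,t}(α) = Σ_{l=s}^{t} α(l)` as a natural number. -/
def wtI (m s t : ℕ) (α : Fin (2*m) → ZMod 2) : ℕ :=
  ∑ l ∈ Finset.Icc s t, (coordZ m α l).val

/-- The `i`-th standard basis vector (1-based index `i`). -/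
def eV (m i : ℕ) : Fin (2*m) → ZMod 2 :=
  fun l => if l.val + 1 = i then 1 else 0

/-- The all-ones vector. -/
def allOne (m : ℕ) : Fin (2*m) → ZMod 2 := fun _ => 1

/-- Hamming weight. -/
def hw (m : ℕ) (α : Fin (2*m) → ZMod 2) : ℕ :=
  (Finset.univ.filter (fun l => α l ≠ 0)).card

/-- The sign function θ(α, i). -/
def theta (m : ℕ) (α : Fin (2*m) → ZMod 2) (i : ℕ) : ℕ :=
  if i % 2 = 0 then wtI m i (2*m) α + i/2
  else wtI m i (2*m) α + (i-1)/2 + (coordZ m α (2*m)).val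

/-!
Modulo 2 the two copies of `⌊s/2⌋` cancel in `θ(α,s) + θ(β,s)`, which therefore depends only
on `γ = α ⊕ β`: it is `wt_{s,2m}(γ) + s·γ(2m)`. For `γ = e ⊕ e_i ⊕ e_j` we have
`γ(2m) = 1`, and `wt_{s,2m}(γ)` counts the `2m + 1 - s` ones of `e` plus one for each of `i, j`
that lies in `[s, 2m]`. Since `(2m + 1 - s) + s` is odd, the pair at `s = i` contributes `1`
and the pair at `s = j` contributes `0`.
-/

lemma coordZ_add (m : ℕ) (α β : Fin (2*m) → ZMod 2) (l : ℕ) :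
    coordZ m (α + β) l = coordZ m α l + coordZ m β l := by
  unfold coordZ; split <;> simp

lemma coordZ_allOne_add_eV_add_eV (m i j l : ℕ) (hl : 1 ≤ l) (hl' : l ≤ 2*m) :
    coordZ m (allOne m + eV m i + eV m j) l
      = 1 + (if l = i then 1 else 0) + (if l = j then 1 else 0) := by
  have hl1 : l - 1 + 1 = l := by omega
  simp [coordZ, allOne, eV, hl, hl', hl1]

lemma sum_coordZ_allOne_add_eV_add_eV (m i j s t : ℕ) (hs : 1 ≤ s) (ht : t ≤ 2*m) :
    ∑ l ∈ Icc s t, coordZ m (allOne m + eV m i + eV m j) l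
      = (#(Icc s t) : ZMod 2) + (if i ∈ Icc s t then 1 else 0)
        + (if j ∈ Icc s t then 1 else 0) := by
  rw [sum_congr rfl fun l hl => coordZ_allOne_add_eV_add_eV m i j l
    (by rw [mem_Icc] at hl; omega) (by rw [mem_Icc] at hl; omega)]
  simp [sum_add_distrib, sum_ite_eq']

lemma natCast_wtI (m s t : ℕ) (α : Fin (2*m) → ZMod 2) :
    (wtI m s t α : ZMod 2) = ∑ l ∈ Icc s t, coordZ m α l := by
  simp [wtI]

lemma natCast_theta_add_theta (m s : ℕ) (α β : Fin (2*m) → ZMod 2) :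
    ((theta m α s + theta m β s : ℕ) : ZMod 2)
      = ∑ l ∈ Icc s (2*m), coordZ m (α + β) l + s * coordZ m (α + β) (2*m) := by
  simp only [coordZ_add, sum_add_distrib, ← natCast_wtI]
  obtain ⟨k, rfl | rfl⟩ := Nat.even_or_odd' s
  · simp only [theta, Nat.mul_mod_right, if_pos, Nat.mul_div_cancel_left k two_pos]
    push_cast [ZMod.natCast_zmod_val]
    ring_nf
    reduce_mod_char
  · simp only [theta, Nat.mul_add_mod, Nat.add_sub_cancel, Nat.mul_div_cancel_left k two_pos,
      if_neg (by norm_num : ¬ (1 % 2 = 0))]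
    push_cast [ZMod.natCast_zmod_val]
    ring_nf
    reduce_mod_char

lemma natCast_card_Icc_add_self (m s : ℕ) (hs : s ≤ 2*m + 1) :
    (#(Icc s (2*m)) : ZMod 2) + s = 1 := by
  rw [Nat.card_Icc, ← Nat.cast_add, Nat.sub_add_cancel hs]
  push_cast
  ring_nf
  reduce_mod_char

theorem theta_alamouti_sign_general (m : ℕ)
    (α β : Fin (2*m) → ZMod 2) (i j : ℕ)
    (hi : 1 ≤ i) (hij : i < j) (hj : j ≤ 2*m - 1)
    (hab : α + β = allOne m + eV m i + eV m j) :
    (theta m α i + theta m β i + theta m α j + theta m β j) % 2 = 1 := by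
  have hlast : coordZ m (α + β) (2*m) = 1 := by
    rw [hab, coordZ_allOne_add_eV_add_eV m i j _ (by omega) le_rfl,
      if_neg (by omega), if_neg (by omega)]
    ring
  have hsum (s : ℕ) (hs : 1 ≤ s) := sum_coordZ_allOne_add_eV_add_eV m i j s (2*m) hs le_rfl
  have hpair_i : ((theta m α i + theta m β i : ℕ) : ZMod 2) = 1 := by
    rw [natCast_theta_add_theta, hlast, hab, hsum i hi,
      if_pos (by rw [mem_Icc]; omega), if_pos (by rw [mem_Icc]; omega)]
    linear_combination (norm := (ring_nf; reduce_mod_char)) natCast_card_Icc_add_self m i (by omega)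
  have hpair_j : ((theta m α j + theta m β j : ℕ) : ZMod 2) = 0 := by
    rw [natCast_theta_add_theta, hlast, hab, hsum j (by omega),
      if_neg (by rw [mem_Icc]; omega), if_pos (by rw [mem_Icc]; omega)]
    linear_combination (norm := (ring_nf; reduce_mod_char)) natCast_card_Icc_add_self m j (by omega)
  rw [← Nat.odd_iff, ← ZMod.natCast_eq_one_iff_odd, add_assoc, Nat.cast_add, hpair_i, hpair_j,
    add_zero]

theorem theta_alamouti_sign (m : ℕ) (hm : 1 ≤ m)
    (α β : Fin (2*m) → ZMod 2) (i j : ℕ)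
    (hi : 1 ≤ i) (hij : i < j) (hj : j ≤ 2*m - 1)
    (hab : α + β = allOne m + eV m i + eV m j) :
    (theta m α i + theta m β i + theta m α j + theta m β j) % 2 = 1 :=
  theta_alamouti_sign_general m α β i j hi hij hj hab
end

section
/- Let m be an odd positive integer. There is no function φ from {α ∈ 𝔽₂^{2m} : wt(α) = m+1, α(2m) = 1} to 𝔽₂ such that for every α in this set and every 1 ≤ i ≤ 2m-1 with α(i) = 1, φ(α ⊕ e_i ⊕ e_{2m} ⊕ e) = φ(α) when i is even, and φ(α ⊕ e_i ⊕ e_{2m} ⊕ e) = φ(α) ⊕ 1 when i is odd. -/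
/-!
Write `S ⊆ {1, …, 2m-1}` for the support of `α` off the last coordinate, an `m`-set. The move at
`i ∈ S` replaces `S` by its complement with `i` added back. Reading `{1, …, 2m-1}` cyclically, the
move at the first point of a cyclic interval of length `m` produces the cyclic interval of length
`m` starting `m` steps further on, so the moves at `1, m+1, 2, m+2, …, m-1, 2m-1, m` run through a
closed cycle of length `2m-1`. Along it `φ` changes by the parity of
`1 + 2 + ⋯ + (2m-1) = m(2m-1)`, which is odd for odd `m`, so `φ(α) = φ(α) + 1`.
-/

open Finset

namespace NoSignFunction

def move (m i : ℕ) (α : Fin (2*m) → ZMod 2) : Fin (2*m) → ZMod 2 :=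
  α + eV m i + eV m (2*m) + allOne m

/-- `P` is read on the 1-based indices of `coordZ` and `eV`. -/
def ofSupport (m : ℕ) (P : ℕ → Prop) [DecidablePred P] : Fin (2*m) → ZMod 2 :=
  fun l => if P (l.val + 1) then 1 else 0

section ofSupport

variable {m : ℕ} {P Q : ℕ → Prop} [DecidablePred P] [DecidablePred Q]

lemma coordZ_ofSupport_of_mem {l : ℕ} (h1 : 1 ≤ l) (h2 : l ≤ 2*m) (hl : P l) :
    coordZ m (ofSupport m P) l = 1 := by
  rw [coordZ, dif_pos ⟨h1, h2⟩, ofSupport, if_pos (by rwa [Nat.sub_add_cancel h1])]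

lemma hw_ofSupport : hw m (ofSupport m P) = #{l ∈ Icc 1 (2*m) | P l} := by
  have hsupp : ∀ l : Fin (2*m), ofSupport m P l ≠ 0 ↔ P (l.val + 1) := fun l => by
    by_cases h : P (l.val + 1) <;> simp [ofSupport, h]
  refine card_bij (fun l _ => l.val + 1) ?_ ?_ ?_
  · intro l hl
    simp only [mem_filter, mem_univ, true_and, hsupp, mem_Icc] at hl ⊢
    exact ⟨⟨by omega, by omega⟩, hl⟩
  · intro _ _ _ _ h
    exact Fin.ext (by simpa using h)
  · intro l hl
    simp only [mem_filter, mem_Icc] at hl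
    refine ⟨⟨l - 1, by omega⟩, ?_, by simp only; omega⟩
    simp only [mem_filter, mem_univ, true_and, hsupp, Nat.sub_add_cancel hl.1.1, hl.2]

lemma ofSupport_congr (h : ∀ l, 1 ≤ l → l ≤ 2*m → (P l ↔ Q l)) :
    ofSupport m P = ofSupport m Q := by
  funext l
  simp only [ofSupport, h (l.val + 1) (by omega) (by omega)]

lemma move_ofSupport {i : ℕ} (hi : i < 2*m)
    (h : ∀ l, 1 ≤ l → l ≤ 2*m → (Q l ↔ (P l ↔ l = i ∨ l = 2*m))) :
    move m i (ofSupport m P) = ofSupport m Q := by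
  funext l
  have hl := h (l.val + 1) (by omega) (by omega)
  simp only [move, ofSupport, eV, allOne, Pi.add_apply]
  split_ifs <;> first | decide | (exfalso; omega) | tauto

end ofSupport

/-- `arcA m k` and `arcB m k` are the cyclic intervals of length `m` in `{1, …, 2m-1}` starting at
`k + 1` and at `m + k + 1`, together with the coordinate `2m`. -/
def arcA (m k : ℕ) : Fin (2*m) → ZMod 2 :=
  ofSupport m (fun l => k + 1 ≤ l ∧ l ≤ k + m ∨ l = 2*m)

def arcB (m k : ℕ) : Fin (2*m) → ZMod 2 :=
  ofSupport m (fun l => l ≤ k + 1 ∨ m + k + 1 ≤ l)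

section arcs

variable {m k : ℕ}

lemma hw_arcA (hk : k < m) : hw m (arcA m k) = m + 1 := by
  have hsupp : {l ∈ Icc 1 (2*m) | k + 1 ≤ l ∧ l ≤ k + m ∨ l = 2*m} =
      Icc (k + 1) (k + m) ∪ {2*m} := by
    ext l; simp only [mem_filter, mem_Icc, mem_union, mem_singleton]; omega
  rw [arcA, hw_ofSupport, hsupp, card_union_of_disjoint
    (by simp only [disjoint_singleton_right, mem_Icc]; omega), Nat.card_Icc, card_singleton]
  omega

lemma hw_arcB (hk : k < m) : hw m (arcB m k) = m + 1 := by
  have hsupp : {l ∈ Icc 1 (2*m) | l ≤ k + 1 ∨ m + k + 1 ≤ l} =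
      Icc 1 (k + 1) ∪ Icc (m + k + 1) (2*m) := by
    ext l; simp only [mem_filter, mem_Icc, mem_union]; omega
  rw [arcB, hw_ofSupport, hsupp, card_union_of_disjoint
    (disjoint_left.2 (by simp only [mem_Icc]; omega)), Nat.card_Icc, Nat.card_Icc]
  omega

lemma move_arcA (hk : k < m) : move m (k + 1) (arcA m k) = arcB m k :=
  move_ofSupport (by omega) (fun _ _ _ => by omega)

lemma move_arcB (hk : k + 1 < m) : move m (m + k + 1) (arcB m k) = arcA m (k + 1) :=
  move_ofSupport (by omega) (fun _ _ _ => by omega)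

lemma arcB_pred_eq_arcA_zero (hm : 0 < m) : arcB m (m - 1) = arcA m 0 :=
  ofSupport_congr (fun _ _ _ => by omega)

end arcs

def IsSignFunction (m : ℕ) (φ : (Fin (2*m) → ZMod 2) → ZMod 2) : Prop :=
  ∀ α : Fin (2*m) → ZMod 2, hw m α = m + 1 → coordZ m α (2*m) = 1 →
    ∀ i : ℕ, 1 ≤ i → i ≤ 2*m - 1 → coordZ m α i = 1 → φ (move m i α) = φ α + i

namespace IsSignFunction

variable {m k : ℕ} {φ : (Fin (2*m) → ZMod 2) → ZMod 2}

lemma apply_arcB (hφ : IsSignFunction m φ) (hk : k < m) :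
    φ (arcB m k) = φ (arcA m k) + (k + 1 : ℕ) := by
  rw [← move_arcA hk]
  exact hφ _ (hw_arcA hk) (coordZ_ofSupport_of_mem (by omega) le_rfl (Or.inr rfl)) _ (by omega)
    (by omega) (coordZ_ofSupport_of_mem (by omega) (by omega) (by omega))

lemma apply_arcA_succ (hφ : IsSignFunction m φ) (hk : k + 1 < m) :
    φ (arcA m (k + 1)) = φ (arcB m k) + (m + k + 1 : ℕ) := by
  rw [← move_arcB hk]
  exact hφ _ (hw_arcB (by omega)) (coordZ_ofSupport_of_mem (by omega) le_rfl (by omega)) _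
    (by omega) (by omega) (coordZ_ofSupport_of_mem (by omega) (by omega) (by omega))

lemma apply_arcA (hφ : IsSignFunction m φ) (hk : k < m) :
    φ (arcA m k) = φ (arcA m 0) + (k * m : ℕ) := by
  induction k with
  | zero => rw [zero_mul, Nat.cast_zero, add_zero]
  | succ k ih =>
    rw [hφ.apply_arcA_succ hk, hφ.apply_arcB (by omega), ih (by omega)]
    have h2 : (2 : ZMod 2) = 0 := rfl
    push_cast
    linear_combination (k + 1 : ZMod 2) * h2

end IsSignFunction

theorem not_isSignFunction {m : ℕ} (hodd : Odd m) (φ : (Fin (2*m) → ZMod 2) → ZMod 2) :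
    ¬ IsSignFunction m φ := by
  intro hφ
  have hm := hodd.pos
  have hcycle : (m - 1) * m + (m - 1 + 1) = m * m := by
    rw [Nat.sub_add_cancel hm, ← Nat.succ_mul, Nat.succ_eq_add_one, Nat.sub_add_cancel hm]
  have hclose := hφ.apply_arcB (Nat.sub_lt hm one_pos)
  rw [arcB_pred_eq_arcA_zero hm, hφ.apply_arcA (Nat.sub_lt hm one_pos), add_assoc,
    ← Nat.cast_add, hcycle, (hodd.mul hodd).natCast_zmod_two] at hclose
  exact one_ne_zero (left_eq_add.mp hclose)

end NoSignFunction

theorem no_sign_function_general (m : ℕ) (hodd : Odd m) :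
    ¬ ∃ φ : (Fin (2*m) → ZMod 2) → ZMod 2,
      ∀ α : Fin (2*m) → ZMod 2, hw m α = m + 1 → coordZ m α (2*m) = 1 →
        ∀ i : ℕ, 1 ≤ i → i ≤ 2*m - 1 → coordZ m α i = 1 →
          (i % 2 = 0 → φ (α + eV m i + eV m (2*m) + allOne m) = φ α) ∧
          (i % 2 = 1 → φ (α + eV m i + eV m (2*m) + allOne m) = φ α + 1) := by
  rintro ⟨φ, hφ⟩
  refine NoSignFunction.not_isSignFunction hodd φ fun α hwt htop i hi₁ hi₂ hi => ?_
  obtain ⟨h_even, h_odd⟩ := hφ α hwt htop i hi₁ hi₂ hi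
  rcases Nat.even_or_odd i with hpar | hpar
  · rw [hpar.natCast_zmod_two, add_zero]
    exact h_even (Nat.even_iff.mp hpar)
  · rw [hpar.natCast_zmod_two]
    exact h_odd (Nat.odd_iff.mp hpar)

theorem no_sign_function (m : ℕ) (hm : 1 ≤ m) (hodd : Odd m) :
    ¬ ∃ φ : (Fin (2*m) → ZMod 2) → ZMod 2,
      ∀ α : Fin (2*m) → ZMod 2, hw m α = m + 1 → coordZ m α (2*m) = 1 →
        ∀ i : ℕ, 1 ≤ i → i ≤ 2*m - 1 → coordZ m α i = 1 →
          (i % 2 = 0 → φ (α + eV m i + eV m (2*m) + allOne m) = φ α) ∧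
          (i % 2 = 1 → φ (α + eV m i + eV m (2*m) + allOne m) = φ α + 1) :=
  no_sign_function_general m hodd
end

section
/- Let m be an odd positive integer and suppose φ : {α ∈ 𝔽₂^{2m} : wt(α) = m+1, α(2m) = 1} → 𝔽₂ satisfies φ(α ⊕ e_i ⊕ e_{2m} ⊕ e) = φ(α) ⊕ (i mod 2) for every α in the domain and every 1 ≤ i ≤ 2m-1 with α(i) = 1. Then for any α in the domain, applying the relation successively along any sequence of indices i₁, …, i_{2m-1} that is a permutation of {1, …, 2m-1} (whenever each step is legal) returns to α with accumulated sign m mod 2; in particular, if such a full sequence of legal steps exists starting from α, then φ(α) = φ(α) ⊕ 1, a contradiction, since ⊕_{l=1}^{2m-1}(e_l ⊕ e_{2m} ⊕ e) = 0 and Σ_{l=1}^{2m-1} (l mod 2) = m is odd. -/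
open Finset

/-- One step of the chain: α ↦ α ⊕ eᵢ ⊕ e_{2m} ⊕ e. -/
def stepV (m i : ℕ) (α : Fin (2*m) → ZMod 2) : Fin (2*m) → ZMod 2 :=
  α + eV m i + eV m (2*m) + allOne m

/-- Legality of a chain of steps from α along a list of indices. -/
def legalChain (m : ℕ) : List ℕ → (Fin (2*m) → ZMod 2) → Prop
  | [], _ => True
  | i :: L, α => coordZ m α i = 1 ∧ legalChain m L (stepV m i α)

/-!
A legal step at index `i` fixes the coordinates `i` and `2m` (both equal to `1`) and flips the
other `2m - 2`, so it keeps the weight at `m + 1`: every vector of a legal chain stays in the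
domain, and `φ` changes by `i mod 2` at each step. Along a permutation of `1, …, 2m - 1` the
steps add up to `Σ eᵢ + (2m - 1)(e_{2m} + e) = (e + e_{2m}) + (e_{2m} + e) = 0`, so the chain
returns to `α`, while the signs add up to `Σ i = m(2m - 1)`, which is odd.
-/

lemma coordZ_of_le {m i : ℕ} (α : Fin (2*m) → ZMod 2) (hi1 : 1 ≤ i) (hi2 : i ≤ 2*m) :
    coordZ m α i = α ⟨i - 1, by omega⟩ :=
  dif_pos ⟨hi1, hi2⟩

lemma eV_apply_of_le {m i : ℕ} (hi1 : 1 ≤ i) (hi2 : i ≤ 2*m) (l : Fin (2*m)) :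
    eV m i l = if l = ⟨i - 1, by omega⟩ then 1 else 0 := by
  simp only [eV, Fin.ext_iff]
  congr 1
  exact propext (by omega)

lemma hw_eq_sum_val (m : ℕ) (α : Fin (2*m) → ZMod 2) : hw m α = ∑ l, (α l).val := by
  rw [hw, Finset.card_filter]
  refine Finset.sum_congr rfl fun l _ => ?_
  generalize α l = x
  fin_cases x <;> rfl

lemma coordZ_stepV_two_mul {m i : ℕ} (α : Fin (2*m) → ZMod 2) (hi : i ≠ 2*m) :
    coordZ m (stepV m i α) (2*m) = coordZ m α (2*m) := by
  rcases Nat.eq_zero_or_pos m with rfl | hm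
  · rfl
  rw [coordZ_of_le _ (by omega) le_rfl, coordZ_of_le _ (by omega) le_rfl]
  simp only [stepV, Pi.add_apply, eV, allOne]
  rw [if_neg (by omega), if_pos (by omega), add_zero, add_assoc, CharTwo.add_self_eq_zero, add_zero]

lemma hw_stepV_add_hw {m i : ℕ} (α : Fin (2*m) → ZMod 2) (hi1 : 1 ≤ i) (hi2 : i < 2*m)
    (hαi : coordZ m α i = 1) (hα2m : coordZ m α (2*m) = 1) :
    hw m (stepV m i α) + hw m α = 2*m + 2 := by
  set a : Fin (2*m) := ⟨i - 1, by omega⟩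
  set b : Fin (2*m) := ⟨2*m - 1, by omega⟩
  have hab : a ≠ b := by simp only [a, b, ne_eq, Fin.ext_iff]; omega
  rw [coordZ_of_le _ hi1 hi2.le] at hαi
  rw [coordZ_of_le _ (by omega) le_rfl] at hα2m
  have hval : ∀ l, (stepV m i α l).val + (α l).val
      = 1 + (if l = a then 1 else 0) + (if l = b then 1 else 0) := by
    intro l
    simp only [stepV, Pi.add_apply, eV_apply_of_le hi1 hi2.le,
      eV_apply_of_le (m := m) (i := 2*m) (by omega) le_rfl, allOne]
    split_ifs with h1 h2 h2
    · exact absurd (h1.symm.trans h2) hab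
    · subst h1; rw [hαi]; rfl
    · subst h2; rw [hα2m]; rfl
    · generalize α l = x
      fin_cases x <;> rfl
  rw [hw_eq_sum_val, hw_eq_sum_val, ← Finset.sum_add_distrib,
    Finset.sum_congr rfl fun l _ => hval l]
  simp [Finset.sum_add_distrib]

lemma foldl_stepV (m : ℕ) (L : List ℕ) (α : Fin (2*m) → ZMod 2) :
    L.foldl (fun β i => stepV m i β) α
      = α + (L.map (eV m)).sum + L.length • (eV m (2*m) + allOne m) := by
  induction L generalizing α with
  | nil => simp
  | cons i L ih =>
    rw [List.foldl_cons, ih, List.map_cons, List.sum_cons, List.length_cons, succ_nsmul, stepV]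
    abel

lemma List.Perm.sum_map_eq_sum_Ico {M : Type*} [AddCommMonoid M] {L : List ℕ} {a b : ℕ}
    (h : L.Perm (List.range' a (b - a))) (f : ℕ → M) :
    (L.map f).sum = ∑ i ∈ Finset.Ico a b, f i := by
  rw [(h.map f).sum_eq, Nat.Ico_eq_range', Finset.sum, Multiset.map_coe, Multiset.sum_coe]

lemma sum_Ico_eV (m : ℕ) : ∑ i ∈ Ico 1 (2*m), eV m i = allOne m + eV m (2*m) := by
  funext l
  simp only [Finset.sum_apply, eV, Finset.sum_ite_eq, Finset.mem_Ico, Pi.add_apply, allOne]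
  split_ifs <;> first | omega | decide

lemma sum_Ico_one_two_mul (m : ℕ) : ∑ i ∈ Ico 1 (2*m), i = m * (2*m - 1) := by
  rcases Nat.eq_zero_or_pos m with rfl | hm
  · rfl
  have h := Finset.sum_range_id_mul_two (2*m)
  rw [Finset.sum_range_eq_add_Ico _ (by omega)] at h
  have : (2*m) * (2*m - 1) = (m * (2*m - 1)) * 2 := by ring
  omega

lemma foldl_stepV_eq_self_of_perm {m : ℕ} {L : List ℕ} (hL : L.Perm (List.range' 1 (2*m - 1)))
    (α : Fin (2*m) → ZMod 2) : L.foldl (fun β i => stepV m i β) α = α := by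
  rcases Nat.eq_zero_or_pos m with rfl | hm
  · exact funext fun l => l.elim0
  obtain ⟨k, hk⟩ : Odd (2*m - 1) := ⟨m - 1, by omega⟩
  rw [foldl_stepV, hL.sum_map_eq_sum_Ico, sum_Ico_eV, hL.length_eq, List.length_range', hk,
    succ_nsmul, mul_nsmul', ZModModule.char_nsmul_eq_zero, zero_add,
    add_comm (eV m _), add_assoc, ZModModule.add_self, add_zero]

lemma map_foldl_stepV_of_legalChain {m : ℕ} {φ : (Fin (2*m) → ZMod 2) → ZMod 2}
    (hφ : ∀ α : Fin (2*m) → ZMod 2, hw m α = m + 1 → coordZ m α (2*m) = 1 →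
      ∀ i : ℕ, 1 ≤ i → i ≤ 2*m - 1 → coordZ m α i = 1 →
        φ (stepV m i α) = φ α + (i : ZMod 2))
    {L : List ℕ} (hL : ∀ i ∈ L, 1 ≤ i ∧ i ≤ 2*m - 1) {α : Fin (2*m) → ZMod 2}
    (hwα : hw m α = m + 1) (hα2m : coordZ m α (2*m) = 1) (hlegal : legalChain m L α) :
    φ (L.foldl (fun β i => stepV m i β) α) = φ α + (L.map ((↑) : ℕ → ZMod 2)).sum := by
  induction L generalizing α with
  | nil => simp
  | cons i L ih =>
    obtain ⟨hαi, hlegal⟩ := hlegal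
    obtain ⟨hi1, hi2⟩ := hL i List.mem_cons_self
    have hw' : hw m (stepV m i α) = m + 1 := by
      have := hw_stepV_add_hw α hi1 (by omega) hαi hα2m
      omega
    have h2m' : coordZ m (stepV m i α) (2*m) = 1 := by
      rw [coordZ_stepV_two_mul α (by omega), hα2m]
    rw [List.foldl_cons, ih (fun j hj => hL j (List.mem_cons_of_mem i hj)) hw' h2m' hlegal,
      hφ α hwα hα2m i hi1 hi2 hαi, List.map_cons, List.sum_cons, add_assoc]

theorem full_cycle_contradiction_general (m : ℕ) (hodd : Odd m)
    (φ : (Fin (2*m) → ZMod 2) → ZMod 2)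
    (hφ : ∀ α : Fin (2*m) → ZMod 2, hw m α = m + 1 → coordZ m α (2*m) = 1 →
      ∀ i : ℕ, 1 ≤ i → i ≤ 2*m - 1 → coordZ m α i = 1 →
        φ (stepV m i α) = φ α + (i : ZMod 2))
    (α : Fin (2*m) → ZMod 2) (hwα : hw m α = m + 1) (hα2m : coordZ m α (2*m) = 1)
    (L : List ℕ) (hperm : L.Perm (List.range' 1 (2*m - 1)))
    (hlegal : legalChain m L α) :
    False := by
  have hL : ∀ i ∈ L, 1 ≤ i ∧ i ≤ 2*m - 1 := fun i hi => by
    have := List.mem_range'_1.mp (hperm.mem_iff.mp hi)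
    omega
  have hsign : (L.map ((↑) : ℕ → ZMod 2)).sum = 1 := by
    rw [hperm.sum_map_eq_sum_Ico, ← Nat.cast_sum, sum_Ico_one_two_mul,
      ZMod.natCast_eq_one_iff_odd]
    exact hodd.mul ⟨m - 1, by have := hodd.pos; omega⟩
  have hcycle := map_foldl_stepV_of_legalChain hφ hL hwα hα2m hlegal
  rw [foldl_stepV_eq_self_of_perm hperm, hsign, left_eq_add] at hcycle
  exact one_ne_zero hcycle

theorem full_cycle_contradiction (m : ℕ) (hm : 1 ≤ m) (hodd : Odd m)
    (φ : (Fin (2*m) → ZMod 2) → ZMod 2)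
    (hφ : ∀ α : Fin (2*m) → ZMod 2, hw m α = m + 1 → coordZ m α (2*m) = 1 →
      ∀ i : ℕ, 1 ≤ i → i ≤ 2*m - 1 → coordZ m α i = 1 →
        φ (stepV m i α) = φ α + (i : ZMod 2))
    (α : Fin (2*m) → ZMod 2) (hwα : hw m α = m + 1) (hα2m : coordZ m α (2*m) = 1)
    (L : List ℕ) (hperm : L.Perm (List.range' 1 (2*m - 1)))
    (hlegal : legalChain m L α) :
    False :=
  full_cycle_contradiction_general m hodd φ hφ α hwα hα2m L hperm hlegal
end

section
/- Let m ≥ 2 and suppose γ ∈ 𝔽₂^{2m} has the form γ(1) = ⋯ = γ(s) = 1, γ(s+1) = 0, γ(t-1) = 1, γ(t) = ⋯ = γ(2m) = 0 for some 0 ≤ s < t ≤ 2m (with wt(γ) = m). Then for indices i with 1 ≤ i ≤ s or t ≤ i ≤ 2m-1, and any j ≠ i with γ(i) ⊕ γ(j) = 1, the index γ ⊕ e_i ⊕ e_j is strictly greater than γ in the order defined by α < β ⟺ Σ_{l=1}^{2m} α(l) 2^l < Σ_{l=1}^{2m} β(l) 2^l; i.e., γ is the smallest index among {γ} ∪ {γ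 ⊕ e_i ⊕ e_j : γ(i) ⊕ γ(j) = 1} for such i. -/
open Finset

/-- The total order value Σ_l α(l)·2^l. -/
def orderVal (m : ℕ) (α : Fin (2*m) → ZMod 2) : ℕ :=
  ∑ l : Fin (2*m), (α l).val * 2 ^ (l.val + 1)

/-!
Flipping a coordinate `p` of a vector from `0` to `1` adds `2^(p+1)` to its order value, and
flipping it from `1` to `0` subtracts `2^(p+1)`. So when `γ(i) ⊕ γ(j) = 1`, the vector
`γ ⊕ e_i ⊕ e_j` moves a `1` of `γ` from one of the coordinates `i, j` to the other, and it exceeds `γ`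
exactly when the `1` moves up. For `i ≤ s` we have `γ(i) = 1`, and the `0` at `j` must lie beyond
the initial run of ones, so `j > s ≥ i`; for `i ≥ t` we have `γ(i) = 0`, and the `1` at `j` must lie
before the final run of zeros, so `j < t ≤ i`.
-/

lemma coordZ_eq_apply {m l : ℕ} (α : Fin (2*m) → ZMod 2) (hl1 : 1 ≤ l) (hl2 : l ≤ 2*m) :
    coordZ m α l = α ⟨l-1, by omega⟩ :=
  dif_pos ⟨hl1, hl2⟩

lemma eV_eq_single {m i : ℕ} (hi1 : 1 ≤ i) (hi2 : i ≤ 2*m) :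
    eV m i = Pi.single (⟨i-1, by omega⟩ : Fin (2*m)) 1 := by
  ext l
  simp only [eV, Pi.single_apply, Fin.ext_iff]
  congr 1
  exact propext (by omega)

lemma orderVal_add_single_of_eq_zero {m : ℕ} {α : Fin (2*m) → ZMod 2} {p : Fin (2*m)}
    (hp : α p = 0) :
    orderVal m (α + Pi.single p 1) = orderVal m α + 2 ^ (p.val + 1) := by
  have hterm : ∀ l, ((α + Pi.single p 1 : Fin (2*m) → ZMod 2) l).val * 2 ^ (l.val + 1)
      = (α l).val * 2 ^ (l.val + 1) + (Pi.single p (2 ^ (p.val + 1)) : Fin (2*m) → ℕ) l := by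
    intro l
    rcases eq_or_ne l p with rfl | hl
    · simp [hp, ZMod.val_one]
    · simp [hl]
  simp only [orderVal, hterm, sum_add_distrib, Finset.sum_pi_single', mem_univ, if_true]

lemma orderVal_add_single_of_eq_one {m : ℕ} {α : Fin (2*m) → ZMod 2} {p : Fin (2*m)}
    (hp : α p = 1) :
    orderVal m (α + Pi.single p 1) + 2 ^ (p.val + 1) = orderVal m α := by
  have hflip : (α + (Pi.single p 1 : Fin (2*m) → ZMod 2)) p = 0 := by
    simp only [Pi.add_apply, Pi.single_eq_same, hp]
    decide
  have hinv : α + Pi.single p 1 + Pi.single p 1 = α := by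
    rw [add_assoc, ← Pi.single_add, show (1 : ZMod 2) + 1 = 0 by decide, Pi.single_zero,
      add_zero]
  rw [← orderVal_add_single_of_eq_zero hflip, hinv]

lemma orderVal_lt_of_move_up {m i j : ℕ} {γ : Fin (2*m) → ZMod 2}
    (hi1 : 1 ≤ i) (hij : i < j) (hj : j ≤ 2*m)
    (hγi : coordZ m γ i = 1) (hγj : coordZ m γ j = 0) :
    orderVal m γ < orderVal m (γ + eV m i + eV m j) := by
  rw [coordZ_eq_apply γ hi1 (by omega)] at hγi
  rw [coordZ_eq_apply γ (by omega) hj] at hγj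
  have hδj : (γ + eV m i) ⟨j-1, by omega⟩ = 0 := by
    simp [eV, hγj, show ¬ j - 1 + 1 = i by omega]
  have hdown := orderVal_add_single_of_eq_one hγi
  have hup := orderVal_add_single_of_eq_zero hδj
  rw [← eV_eq_single hi1 (by omega)] at hdown
  rw [← eV_eq_single (by omega) hj] at hup
  have hpow : 2 ^ (i - 1 + 1) < 2 ^ (j - 1 + 1) := Nat.pow_lt_pow_right (by norm_num) (by omega)
  simp only at hup hdown
  omega

theorem gamma_smallest_general (m : ℕ)
    (γ : Fin (2*m) → ZMod 2) (s t : ℕ)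
    (hpre : ∀ l, 1 ≤ l → l ≤ s → coordZ m γ l = 1)
    (hsuf : ∀ l, t ≤ l → l ≤ 2*m → coordZ m γ l = 0)
    (i : ℕ) (hi : (1 ≤ i ∧ i ≤ s) ∨ (t ≤ i ∧ i ≤ 2*m - 1))
    (j : ℕ) (hj1 : 1 ≤ j) (hj2 : j ≤ 2*m - 1)
    (hsum : coordZ m γ i + coordZ m γ j = 1) :
    orderVal m γ < orderVal m (γ + eV m i + eV m j) := by
  rcases hi with ⟨hi1, hi2⟩ | ⟨hi1, hi2⟩
  · have hγi : coordZ m γ i = 1 := hpre i hi1 hi2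
    have hγj : coordZ m γ j = 0 := by simpa [hγi] using hsum
    have hsj : s < j := by
      by_contra! hjs
      simp [hpre j hj1 hjs] at hγj
    exact orderVal_lt_of_move_up hi1 (by omega) (by omega) hγi hγj
  · have hγi : coordZ m γ i = 0 := hsuf i hi1 (by omega)
    have hγj : coordZ m γ j = 1 := by simpa [hγi] using hsum
    have hjt : j < t := by
      by_contra! htj
      simp [hsuf j htj (by omega)] at hγj
    rw [add_right_comm]
    exact orderVal_lt_of_move_up hj1 (by omega) (by omega) hγj hγi

theorem gamma_smallest (m : ℕ) (hm : 2 ≤ m)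
    (γ : Fin (2*m) → ZMod 2) (s t : ℕ) (hst : s < t) (ht : t ≤ 2*m)
    (hpre : ∀ l, 1 ≤ l → l ≤ s → coordZ m γ l = 1)
    (hs1 : coordZ m γ (s+1) = 0)
    (ht1 : coordZ m γ (t-1) = 1)
    (hsuf : ∀ l, t ≤ l → l ≤ 2*m → coordZ m γ l = 0)
    (hwγ : hw m γ = m)
    (i : ℕ) (hi : (1 ≤ i ∧ i ≤ s) ∨ (t ≤ i ∧ i ≤ 2*m - 1))
    (j : ℕ) (hj1 : 1 ≤ j) (hj2 : j ≤ 2*m - 1) (hij : j ≠ i)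
    (hsum : coordZ m γ i + coordZ m γ j = 1) :
    orderVal m γ < orderVal m (γ + eV m i + eV m j) :=
  gamma_smallest_general m γ s t hpre hsuf i hi j hj1 hj2 hsum
end
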